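/- arXiv:2508.02607 — 2 statements merged into one kernel-verified Lean document; each statement's English description precedes it below -/
import Mathlib

section
/- For every positive integer n, S(n) ≥ (3/log 3)·log n, with equality if and only if n is a power of 3. -/
/-!
Taking `logb 3`, the claim is `n ^ 3 ≤ 3 ^ S n`, with equality exactly for powers of `3`.
Both sides are multiplicative in `n`, so the inequality reduces to `p ^ 3 ≤ 3 ^ p` for primes `p`.
If `n ^ 3 = 3 ^ S n`, then `n` divides a power of `3` and hence is one.
-/

def S (n : ℕ) : ℕ := n.factorization.sum fun p k => k * p

open Real

theorem S_mul {a b : ℕ} (ha : a ≠ 0) (hb : b ≠ 0) : S (a * b) = S a + S b := by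
  unfold S
  rw [Nat.factorization_mul ha hb, Finsupp.sum_add_index]
  · intro p _
    simp
  · intro p _ k₁ k₂
    ring

theorem S_prime_pow {p : ℕ} (hp : p.Prime) (k : ℕ) : S (p ^ k) = k * p := by
  unfold S
  rw [hp.factorization_pow, Finsupp.sum_single_index (zero_mul p)]

theorem S_prime {p : ℕ} (hp : p.Prime) : S p = p := by
  simpa using S_prime_pow hp 1

theorem Nat.cube_le_three_pow (n : ℕ) : n ^ 3 ≤ 3 ^ n := by
  obtain hn | hn := lt_or_ge n 3
  · interval_cases n <;> norm_num
  induction n, hn using Nat.le_induction with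
  | base => norm_num
  | succ n hn ih =>
    calc (n + 1) ^ 3
        ≤ 3 * n ^ 3 := by nlinarith [Nat.mul_le_mul_right (n ^ 2) hn, Nat.mul_le_mul_right n hn]
      _ ≤ 3 * 3 ^ n := by omega
      _ = 3 ^ (n + 1) := by ring

theorem pow_three_le_three_pow_S (n : ℕ) : n ^ 3 ≤ 3 ^ S n := by
  induction n using Nat.recOnMul with
  | zero => simp
  | one => simp [S]
  | prime p hp => simpa [S_prime hp] using Nat.cube_le_three_pow p
  | mul a b iha ihb =>
    rcases eq_or_ne a 0 with rfl | ha
    · simp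
    rcases eq_or_ne b 0 with rfl | hb
    · simp
    rw [S_mul ha hb, mul_pow, pow_add]
    exact Nat.mul_le_mul iha ihb

theorem pow_three_eq_three_pow_S_iff (n : ℕ) : n ^ 3 = 3 ^ S n ↔ ∃ k : ℕ, n = 3 ^ k := by
  constructor
  · intro h
    obtain ⟨k, -, hk⟩ :=
      (Nat.dvd_prime_pow Nat.prime_three).1 (h ▸ dvd_pow_self n three_ne_zero)
    exact ⟨k, hk⟩
  · rintro ⟨k, rfl⟩
    rw [S_prime_pow Nat.prime_three, ← pow_mul, mul_comm]

theorem div_log_mul_log_eq_logb_pow (b x : ℝ) (k : ℕ) : k / log b * log x = logb b (x ^ k) := by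
  rw [logb, log_pow]
  ring

theorem natCast_eq_logb_pow {b : ℝ} (hb : 1 < b) (m : ℕ) : (m : ℝ) = logb b (b ^ m) := by
  rw [logb_pow, logb_self_eq_one hb, mul_one]

theorem S_lower_bound (n : ℕ) (hn : 0 < n) :
    (3 / Real.log 3) * Real.log n ≤ (S n : ℝ) ∧
      ((S n : ℝ) = (3 / Real.log 3) * Real.log n ↔ ∃ k : ℕ, n = 3 ^ k) := by
  have hcube : (0 : ℝ) < (n : ℝ) ^ 3 := by positivity
  have hpow : (0 : ℝ) < (3 : ℝ) ^ S n := by positivity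
  have hb : (1 : ℝ) < 3 := by norm_num
  have hlog : 3 / log 3 * log n = logb 3 ((n : ℝ) ^ 3) := by
    exact_mod_cast div_log_mul_log_eq_logb_pow 3 n 3
  rw [hlog, natCast_eq_logb_pow hb (S n)]
  constructor
  · rw [logb_le_logb hb hcube hpow]
    exact_mod_cast pow_three_le_three_pow_S n
  · rw [← pow_three_eq_three_pow_S_iff, eq_comm, (logb_injOn_pos hb).eq_iff hcube hpow]
    norm_cast
end

section
/- Let c : ℕ → ℂ be such that the Dirichlet series Σ c(n) n^{-s} converges absolutely for Re(s) > σ₀, and let α ∈ ℂ with 0 < |α| ≤ 1. Then the twisted Dirichlet series Σ α^{S(n)} c(n) n^{-s} converges absolutely for all s with Re(s) > σ₀ + (3/log 3)·log|α|. -/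
theorem three_mul_log_le_mul_log_three (n : ℕ) : 3 * Real.log n ≤ n * Real.log 3 := by
  rcases le_or_gt 3 n with h3 | hlt
  · have hn : (3 : ℝ) ≤ n := by exact_mod_cast h3
    have h := Real.log_div_self_antitoneOn (Set.mem_Ici.2 Real.exp_one_lt_three.le)
      (Set.mem_Ici.2 (Real.exp_one_lt_three.le.trans hn)) hn
    rw [div_le_div_iff₀ (by linarith) (by norm_num)] at h
    linarith
  · interval_cases n
    · simp
    · simpa using Real.log_nonneg (by norm_num : (1 : ℝ) ≤ 3)
    · have h : Real.log (2 ^ 3) ≤ Real.log (3 ^ 2) := Real.log_le_log (by norm_num) (by norm_num)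
      rw [Real.log_pow, Real.log_pow] at h
      push_cast at h ⊢
      linarith

theorem three_mul_log_le_S_mul_log_three (n : ℕ) : 3 * Real.log n ≤ S n * Real.log 3 := by
  rw [Real.log_nat_eq_sum_factorization, S, Nat.cast_finsupp_sum, Finsupp.mul_sum, Finsupp.sum_mul]
  refine Finset.sum_le_sum fun p _ => ?_
  have hp := three_mul_log_le_mul_log_three p
  push_cast
  nlinarith [(n.factorization p).cast_nonneg (α := ℝ)]

theorem pow_S_le_rpow {x : ℝ} (hx0 : 0 < x) (hx1 : x ≤ 1) {n : ℕ} (hn : n ≠ 0) :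
    x ^ S n ≤ (n : ℝ) ^ (3 / Real.log 3 * Real.log x) := by
  have hn' : (0 : ℝ) < n := by exact_mod_cast Nat.pos_of_ne_zero hn
  have hlog3 : 0 < Real.log 3 := Real.log_pos (by norm_num)
  have hS : 3 / Real.log 3 * Real.log n ≤ S n := by
    rw [div_mul_eq_mul_div, div_le_iff₀ hlog3]
    exact three_mul_log_le_S_mul_log_three n
  rw [← Real.rpow_natCast, Real.rpow_def_of_pos hx0, Real.rpow_def_of_pos hn', Real.exp_le_exp]
  calc Real.log x * S n ≤ Real.log x * (3 / Real.log 3 * Real.log n) :=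
        mul_le_mul_of_nonpos_left hS (Real.log_nonpos hx0.le hx1)
    _ = Real.log n * (3 / Real.log 3 * Real.log x) := by ring

theorem norm_natCast_cpow_neg_sub_ofReal {n : ℕ} (hn : n ≠ 0) (s : ℂ) (t : ℝ) :
    ‖(n : ℂ) ^ (-(s - t))‖ = (n : ℝ) ^ t * ‖(n : ℂ) ^ (-s)‖ := by
  have hn' := Nat.pos_of_ne_zero hn
  rw [Complex.norm_natCast_cpow_of_pos hn', Complex.norm_natCast_cpow_of_pos hn',
    ← Real.rpow_add (by exact_mod_cast hn')]
  simp [sub_eq_add_neg]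

theorem twisted_dirichlet_series_abs_convergence (c : ℕ → ℂ) (σ₀ : ℝ)
    (hc : ∀ s : ℂ, σ₀ < s.re →
      Summable fun n : ℕ => ‖c (n + 1) * ((n + 1 : ℕ) : ℂ) ^ (-s)‖)
    (α : ℂ) (hα0 : 0 < ‖α‖) (hα1 : ‖α‖ ≤ 1) :
    ∀ s : ℂ, σ₀ + (3 / Real.log 3) * Real.log ‖α‖ < s.re →
      Summable fun n : ℕ =>
        ‖α ^ S (n + 1) * c (n + 1) * ((n + 1 : ℕ) : ℂ) ^ (-s)‖ := by
  intro s hs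
  set t := 3 / Real.log 3 * Real.log ‖α‖
  have hst : σ₀ < (s - t).re := by
    rw [Complex.sub_re, Complex.ofReal_re]
    linarith
  refine (hc (s - t) hst).of_nonneg_of_le (fun _ => norm_nonneg _) fun n => ?_
  rw [norm_mul, norm_mul, norm_mul, norm_pow, norm_natCast_cpow_neg_sub_ofReal n.succ_ne_zero]
  calc ‖α‖ ^ S (n + 1) * ‖c (n + 1)‖ * ‖((n + 1 : ℕ) : ℂ) ^ (-s)‖
      ≤ ((n + 1 : ℕ) : ℝ) ^ t * ‖c (n + 1)‖ * ‖((n + 1 : ℕ) : ℂ) ^ (-s)‖ := by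
        gcongr
        exact pow_S_le_rpow hα0 hα1 n.succ_ne_zero
    _ = ‖c (n + 1)‖ * (((n + 1 : ℕ) : ℝ) ^ t * ‖((n + 1 : ℕ) : ℂ) ^ (-s)‖) := by ring
end
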